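/- Let (x_i, v_i) solve the Cucker-Smale system with translation-invariant decreasing kernel r, and define the velocity fluctuation E(t) = ∑_{i=1}^N |v_i(t) − v_c|², where v_c is the (constant) mean velocity, and φ(t) = min_{1≤i,j≤N} r(|x_i(t) − x_j(t)|). Then E(t) ≤ E(0) e^{−2λ Φ(t)} where Φ(t) = ∫₀^t φ(τ) dτ. -/

import Mathlib

open Real Finset MeasureTheory
open scoped RealInnerProductSpace

/-!
Momentum conservation makes `v i - v_c` a family with zero sum at every time. Symmetrizing the
alignment term gives `E' = -(λ/N) ∑ᵢⱼ rᵢⱼ |vᵢ - vⱼ|² ≤ -(λ/N) φ ∑ᵢⱼ |vᵢ - vⱼ|² = -2λφE`, the last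
step because `∑ᵢⱼ |wᵢ - wⱼ|² = 2N ∑ᵢ |wᵢ|²` for zero-sum `w`. Then `log E` has derivative at most
`-2λφ`, which integrates to the claim when `E(t) > 0` (then `E > 0` on `[0, t]`, as `E` is
antitone); the case `E(t) = 0` is trivial.
-/

theorem le_mul_exp_neg_integral_of_hasDerivAt {E E' k : ℝ → ℝ} {a b : ℝ} (hab : a ≤ b)
    (hE : ∀ s, HasDerivAt E (E' s) s) (hE0 : ∀ s, 0 ≤ E s) (hk : ∀ s, 0 ≤ k s)
    (hE' : ∀ s, E' s ≤ -(k s * E s)) :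
    E b ≤ E a * exp (-∫ s in a..b, k s) := by
  have hanti : Antitone E := antitone_of_hasDerivAt_nonpos hE fun s =>
    (hE' s).trans (neg_nonpos.2 (mul_nonneg (hk s) (hE0 s)))
  rcases (hE0 b).eq_or_lt with hb | hb
  · rw [← hb]
    exact mul_nonneg (hE0 a) (exp_nonneg _)
  by_cases hint : IntervalIntegrable k volume a b
  swap
  · rw [intervalIntegral.integral_undef hint, neg_zero, exp_zero, mul_one]
    exact hanti hab
  have hpos : ∀ s ∈ Set.Icc a b, 0 < E s := fun s hs => hb.trans_le (hanti hs.2)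
  -- `k` is only integrable, so `E · exp (∫ k)` need not be differentiable; comparing `log E` with
  -- `∫ -k` needs no integrability of `(log E)'`.
  have hlog : log (E b) - log (E a) ≤ ∫ s in a..b, -k s := by
    refine intervalIntegral.sub_le_integral_of_hasDeriv_right_of_le hab
      (fun s hs => ((hE s).continuousAt.log (hpos s hs).ne').continuousWithinAt)
      (fun s hs => ((hE s).log (hpos s (Set.Ioo_subset_Icc_self hs)).ne').hasDerivWithinAt)
      ((intervalIntegrable_iff_integrableOn_Icc_of_le hab).1 hint.neg) fun s hs => ?_
    have hs := hpos s (Set.Ioo_subset_Icc_self hs)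
    rw [div_le_iff₀ hs]
    linarith [hE' s]
  rw [intervalIntegral.integral_neg] at hlog
  calc E b = exp (log (E b)) := (exp_log hb).symm
    _ ≤ exp (log (E a) + -∫ s in a..b, k s) := exp_le_exp.2 (by linarith)
    _ = E a * exp (-∫ s in a..b, k s) := by
      rw [exp_add, exp_log (hpos a ⟨le_rfl, hab⟩)]

section FiniteSums

variable {ι H : Type*} [Fintype ι] [NormedAddCommGroup H] [InnerProductSpace ℝ H]

theorem sum_sum_smul_sub_eq_zero {R M : Type*} [Ring R] [AddCommGroup M] [Module R M]
    {c : ι → ι → R} (hc : ∀ i j, c i j = c j i) (u : ι → M) :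
    ∑ i, ∑ j, c i j • (u j - u i) = 0 := by
  simp only [smul_sub, sum_sub_distrib]
  rw [sum_comm, sub_eq_zero]
  exact sum_congr rfl fun i _ => sum_congr rfl fun j _ => by rw [hc]

theorem sum_sub_inv_card_smul_sum {M : Type*} [AddCommGroup M] [Module ℝ M] [Nonempty ι]
    (u : ι → M) :
    ∑ i, (u i - (Fintype.card ι : ℝ)⁻¹ • ∑ j, u j) = 0 := by
  rw [sum_sub_distrib, sum_const, card_univ, ← Nat.cast_smul_eq_nsmul ℝ, smul_smul,
    mul_inv_cancel₀ (Nat.cast_ne_zero.2 Fintype.card_ne_zero), one_smul, sub_self]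

theorem two_mul_sum_sum_mul_inner_sub {c : ι → ι → ℝ} (hc : ∀ i j, c i j = c j i) (w : ι → H) :
    2 * ∑ i, ∑ j, c i j * ⟪w j - w i, w i⟫ = -∑ i, ∑ j, c i j * ‖w i - w j‖ ^ 2 := by
  have hswap : ∑ i, ∑ j, c i j * ⟪w j - w i, w i⟫ = ∑ i, ∑ j, c i j * ⟪w i - w j, w j⟫ := by
    rw [sum_comm]
    exact sum_congr rfl fun i _ => sum_congr rfl fun j _ => by rw [hc]
  have hpair : ∀ i j, ⟪w j - w i, w i⟫ + ⟪w i - w j, w j⟫ = -‖w i - w j‖ ^ 2 := fun i j => by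
    rw [← real_inner_self_eq_norm_sq]
    simp only [inner_sub_left, inner_sub_right, real_inner_comm (w i) (w j)]
    ring
  rw [two_mul]
  nth_rw 2 [hswap]
  simp only [← sum_add_distrib, ← mul_add, hpair, mul_neg, sum_neg_distrib]

theorem sum_sum_norm_sub_sq {w : ι → H} (hw : ∑ i, w i = 0) :
    ∑ i, ∑ j, ‖w i - w j‖ ^ 2 = 2 * Fintype.card ι * ∑ i, ‖w i‖ ^ 2 := by
  have hinner : ∑ i, ∑ j, ⟪w i, w j⟫ = 0 := by
    simp only [← inner_sum, ← sum_inner, hw, inner_zero_left]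
  simp only [norm_sub_sq_real, sum_add_distrib, sum_sub_distrib, ← mul_sum, hinner, sum_const,
    card_univ, nsmul_eq_mul]
  ring

theorem mul_two_mul_card_mul_sum_norm_sq_le {c : ι → ι → ℝ} {m : ℝ} (hm : ∀ i j, m ≤ c i j)
    {w : ι → H} (hw : ∑ i, w i = 0) :
    m * (2 * Fintype.card ι * ∑ i, ‖w i‖ ^ 2) ≤ ∑ i, ∑ j, c i j * ‖w i - w j‖ ^ 2 := by
  rw [← sum_sum_norm_sub_sq hw]
  simp only [mul_sum]
  gcongr with i _ j _
  exact hm i j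

end FiniteSums

def IsAlignmentFlow {ι H : Type*} [Fintype ι] [NormedAddCommGroup H] [InnerProductSpace ℝ H]
    (κ : ℝ) (c : ℝ → ι → ι → ℝ) (v : ι → ℝ → H) : Prop :=
  ∀ i t, HasDerivAt (v i) (κ • ∑ j, c t i j • (v j t - v i t)) t

namespace IsAlignmentFlow

variable {ι H : Type*} [Fintype ι] [NormedAddCommGroup H] [InnerProductSpace ℝ H]
  {κ : ℝ} {c : ℝ → ι → ι → ℝ} {v : ι → ℝ → H}

theorem sum_eq (hv : IsAlignmentFlow κ c v) (hc : ∀ t i j, c t i j = c t j i) (t : ℝ) :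
    ∑ i, v i t = ∑ i, v i 0 := by
  have hsum : ∀ s, HasDerivAt (fun s => ∑ i, v i s) 0 s := fun s => by
    convert HasDerivAt.fun_sum fun i (_ : i ∈ univ) => hv i s
    rw [← smul_sum, sum_sum_smul_sub_eq_zero (hc s), smul_zero]
  exact is_const_of_deriv_eq_zero (fun s => (hsum s).differentiableAt)
    (fun s => (hsum s).deriv) t 0

theorem hasDerivAt_sum_norm_sub_sq (hv : IsAlignmentFlow κ c v) (hc : ∀ t i j, c t i j = c t j i)
    (w : H) (t : ℝ) :
    HasDerivAt (fun s => ∑ i, ‖v i s - w‖ ^ 2)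
      (-κ * ∑ i, ∑ j, c t i j * ‖v i t - v j t‖ ^ 2) t := by
  have hterm : ∀ i, HasDerivAt (fun s => ‖v i s - w‖ ^ 2)
      (κ * (2 * ∑ j, c t i j * ⟪v j t - v i t, v i t - w⟫)) t := fun i => by
    convert ((hv i t).sub_const w).norm_sq using 1
    simp only [inner_sum, real_inner_smul_right, real_inner_comm (v i t - w)]
    ring
  refine (HasDerivAt.fun_sum fun i (_ : i ∈ univ) => hterm i).congr_deriv ?_
  have := two_mul_sum_sum_mul_inner_sub (hc t) fun i => v i t - w
  simp only [sub_sub_sub_cancel_right] at this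
  rw [← mul_sum, ← mul_sum, this]
  ring

end IsAlignmentFlow

theorem cucker_smale_velocity_fluctuation_decay_general
    {d N : ℕ} (hN : 0 < N) (lam : ℝ) (hlam : 0 < lam)
    (r : ℝ → ℝ) (hr0 : ∀ s, 0 ≤ r s)
    (x v : Fin N → ℝ → EuclideanSpace ℝ (Fin d))
    (hv : ∀ i t, HasDerivAt (v i)
      ((lam / N) • ∑ j, r ‖x i t - x j t‖ • (v j t - v i t)) t)
    (vc : EuclideanSpace ℝ (Fin d)) (hvc : vc = (N : ℝ)⁻¹ • ∑ i, v i 0)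
    (φ : ℝ → ℝ)
    (hφ : ∀ t, IsLeast (Set.range fun p : Fin N × Fin N => r ‖x p.1 t - x p.2 t‖) (φ t)) :
    ∀ t, 0 ≤ t →
      ∑ i, ‖v i t - vc‖ ^ 2
        ≤ (∑ i, ‖v i 0 - vc‖ ^ 2) * Real.exp (-2 * lam * ∫ τ in (0:ℝ)..t, φ τ) := by
  intro t ht
  have : Nonempty (Fin N) := ⟨⟨0, hN⟩⟩
  set c : ℝ → Fin N → Fin N → ℝ := fun t i j => r ‖x i t - x j t‖
  have hc : ∀ t i j, c t i j = c t j i := fun t i j => by simp only [c, norm_sub_rev]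
  have hflow : IsAlignmentFlow (lam / N) c v := hv
  have hmean : ∀ s, ∑ i, (v i s - vc) = 0 := fun s => by
    simpa [hvc, hflow.sum_eq hc s] using sum_sub_inv_card_smul_sum fun i => v i s
  have hφ0 : ∀ s, 0 ≤ φ s := fun s => by
    obtain ⟨p, hp⟩ := (hφ s).1
    exact hp ▸ hr0 _
  have hdissip : ∀ s, φ s * (2 * N * ∑ i, ‖v i s - vc‖ ^ 2)
      ≤ ∑ i, ∑ j, c s i j * ‖v i s - v j s‖ ^ 2 := fun s => by
    simpa only [sub_sub_sub_cancel_right, Fintype.card_fin] using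
      mul_two_mul_card_mul_sum_norm_sq_le (fun i j => (hφ s).2 ⟨(i, j), rfl⟩) (hmean s)
  refine (le_mul_exp_neg_integral_of_hasDerivAt ht (k := fun s => 2 * lam * φ s)
    (hflow.hasDerivAt_sum_norm_sub_sq hc vc) (fun s => sum_nonneg fun i _ => sq_nonneg _)
    (fun s => mul_nonneg (by positivity) (hφ0 s)) fun s => ?_).trans_eq ?_
  · have hκ : 0 ≤ lam / N := by positivity
    have := mul_le_mul_of_nonneg_left (hdissip s) hκ
    field_simp at this ⊢
    linarith
  · rw [intervalIntegral.integral_const_mul, neg_mul, neg_mul]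

/-- Decay of velocity fluctuations for the Cucker-Smale system with a decreasing
translation-invariant kernel: `E(t) ≤ E(0) exp(-2λΦ(t))`, `Φ(t) = ∫₀ᵗ φ`. -/
theorem cucker_smale_velocity_fluctuation_decay
    {d N : ℕ} (hN : 0 < N) (lam : ℝ) (hlam : 0 < lam)
    (r : ℝ → ℝ) (hr0 : ∀ s, 0 ≤ r s) (hrmono : Antitone r)
    (x v : Fin N → ℝ → EuclideanSpace ℝ (Fin d))
    (hx : ∀ i t, HasDerivAt (x i) (v i t) t)
    (hv : ∀ i t, HasDerivAt (v i)
      ((lam / N) • ∑ j, r ‖x i t - x j t‖ • (v j t - v i t)) t)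
    (vc : EuclideanSpace ℝ (Fin d)) (hvc : vc = (N : ℝ)⁻¹ • ∑ i, v i 0)
    (φ : ℝ → ℝ)
    (hφ : ∀ t, IsLeast (Set.range fun p : Fin N × Fin N => r ‖x p.1 t - x p.2 t‖) (φ t)) :
    ∀ t, 0 ≤ t →
      ∑ i, ‖v i t - vc‖ ^ 2
        ≤ (∑ i, ‖v i 0 - vc‖ ^ 2) * Real.exp (-2 * lam * ∫ τ in (0:ℝ)..t, φ τ) :=
  cucker_smale_velocity_fluctuation_decay_general hN lam hlam r hr0 x v hv vc hvc φ hφ
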